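/- arXiv:1510.00473 — 3 statements merged into one kernel-verified Lean document; each statement's English description precedes it below -/
import Mathlib

section
/- Let n be a positive integer and let D be a finite digraph with a haven of order 3n. Then there exists a linked set X ⊆ V(D) with |X| = 2n. -/
/-- A directed path in the digraph with adjacency relation `A`: a nonempty list of
distinct vertices in which each consecutive pair is joined by an edge directed forwards. -/
def IsDipath {V : Type*} (A : V → V → Prop) (l : List V) : Prop :=
  l ≠ [] ∧ l.Nodup ∧ l.Chain' A

/-- A directed path all of whose vertices lie in the set `S`. -/
def DipathIn {V : Type*} (A : V → V → Prop) (S : Set V) (l : List V) : Prop :=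
  IsDipath A l ∧ ∀ v ∈ l, v ∈ S

/-- A directed path from `u` to `v`. -/
def DipathFromTo {V : Type*} (A : V → V → Prop) (l : List V) (u v : V) : Prop :=
  IsDipath A l ∧ l.head? = some u ∧ l.getLast? = some v

/-- The digraph with adjacency `A` is strongly connected on the vertex set `S`:
any vertex of `S` can reach any other by a directed path staying inside `S`. -/
def StrongOn {V : Type*} (A : V → V → Prop) (S : Set V) : Prop :=
  ∀ u ∈ S, ∀ v ∈ S, ∃ l : List V, DipathIn A S l ∧ l.head? = some u ∧ l.getLast? = some v

/-- `C` is (the vertex set of) a strong component of the subdigraph induced on `W`: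
a maximal nonempty strongly connected subset of `W`. -/
def IsStrongComponent {V : Type*} (A : V → V → Prop) (W C : Set V) : Prop :=
  C ⊆ W ∧ C.Nonempty ∧ StrongOn A C ∧
    ∀ C' : Set V, C ⊆ C' → C' ⊆ W → StrongOn A C' → C' = C

/-- `B` is a haven of order `w` in the digraph with adjacency `A` and vertex set `S`:
for every `Z ⊆ S` with `|Z| < w`, `B Z` is a strong component of the digraph minus `Z`,
and `B Z ⊆ B Z'` whenever `Z' ⊆ Z` (the haven axiom). -/
def IsHavenOn {V : Type*} (A : V → V → Prop) (S : Set V) (w : ℕ) (B : Finset V → Set V) : Prop :=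
  ∀ Z : Finset V, ↑Z ⊆ S → Z.card < w →
    IsStrongComponent A (S \ ↑Z) (B Z) ∧ ∀ Z' : Finset V, Z' ⊆ Z → B Z ⊆ B Z'

/-- The digraph with adjacency `A` and vertex set `S` has a haven of order `w`. -/
def HasHavenOn {V : Type*} (A : V → V → Prop) (S : Set V) (w : ℕ) : Prop :=
  ∃ B : Finset V → Set V, IsHavenOn A S w B

/-- The digraph with adjacency `A` (on its whole vertex type) has a haven of order `w`. -/
def HasHaven {V : Type*} (A : V → V → Prop) (w : ℕ) : Prop :=
  HasHavenOn A Set.univ w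

/-- A linkage from the finite set `S` to the finite set `T`: for each `a ∈ S`,
`P a` is a directed path from `a` to `τ a ∈ T`, and the paths are pairwise vertex-disjoint
(so the ends `τ a` are distinct vertices of `T`). -/
def IsLinkage {V : Type*} (A : V → V → Prop) (S T : Finset V)
    (P : V → List V) (τ : V → V) : Prop :=
  (∀ a ∈ S, τ a ∈ T ∧ DipathFromTo A (P a) a (τ a)) ∧
  ∀ a₁ ∈ S, ∀ a₂ ∈ S, a₁ ≠ a₂ → ∀ v ∈ P a₁, v ∉ P a₂

/-- `X` is linked: for every `S, T ⊆ X` with `|S| = |T|` there is a linkage of `|S|`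
pairwise vertex-disjoint directed paths from `S` to `T`. -/
def Linked {V : Type*} (A : V → V → Prop) (X : Finset V) : Prop :=
  ∀ S T : Finset V, S ⊆ X → T ⊆ X → S.card = T.card →
    ∃ (P : V → List V) (τ : V → V), IsLinkage A S T P τ

/-- `(S, A')` is a subdigraph of the digraph with adjacency `A`: every edge of `A'`
is an edge of `A` with both ends in `S`. -/
def IsSubdigraph {V : Type*} (A : V → V → Prop) (S : Set V) (A' : V → V → Prop) : Prop :=
  ∀ u v, A' u v → A u v ∧ u ∈ S ∧ v ∈ S

/-- The digraph with adjacency `A` and vertex set `S` is `k`-eulerianizable: it is strongly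
connected and one can assign a positive multiplicity to each edge so that at every vertex the
total multiplicity of in-edges equals that of the out-edges and both are at most `k`. -/
def Eulerianizable {V : Type*} [Fintype V] (A : V → V → Prop) (S : Set V) (k : ℕ) : Prop :=
  StrongOn A S ∧ ∃ m : V → V → ℕ,
    (∀ u v, A u v → 1 ≤ m u v) ∧ (∀ u v, ¬ A u v → m u v = 0) ∧
    ∀ v ∈ S, (∑ u, m u v) = (∑ u, m v u) ∧ (∑ u, m v u) ≤ k

/-!
Choose a set `X` of `2n` vertices whose haven component `B X` is as small as possible. If two
subsets `S, T ⊆ X` of equal size could not be linked, Menger's theorem would give a separator `Z`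
with `|Z| < |S|`, and then `|X ∪ Z| < 3n`. A vertex `c` of `B (X ∪ Z)` cannot both be reached from
`S` and reach `T` in `D - Z`; say it reaches no vertex of `T`. Then the strong component
`B (X \ T ∪ Z)` contains `c` and so avoids `T`, which makes it equal to `B (X ∪ Z) ⊆ B X`. Since
`|X \ T ∪ Z| < 2n` and a haven component of `M` has at least `3n - |M|` vertices, padding
`X \ T ∪ Z` with vertices of this component yields a `2n`-set with a smaller haven component.
-/

def ReachIn {V : Type*} (A : V → V → Prop) (U : Set V) (u v : V) : Prop :=
  u ∈ U ∧ Relation.ReflTransGen (fun a b => A a b ∧ a ∈ U ∧ b ∈ U) u v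

def Separates {V : Type*} (A : V → V → Prop) (S T Z : Finset V) : Prop :=
  ∀ s ∈ S, ∀ t ∈ T, ¬ ReachIn A (↑Z)ᶜ s t

def deleteEdge {V : Type*} (A : V → V → Prop) (x y : V) : V → V → Prop :=
  fun a b => A a b ∧ ¬(a = x ∧ b = y)

namespace ReachIn

variable {V : Type*} {A A' : V → V → Prop} {U U' : Set V} {u v w : V}

theorem refl (hu : u ∈ U) : ReachIn A U u u := ⟨hu, .refl⟩

theorem mem_right (h : ReachIn A U u v) : v ∈ U := by
  obtain ⟨hu, h⟩ := h
  cases h with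
  | refl => exact hu
  | tail _ hab => exact hab.2.2

theorem trans (h : ReachIn A U u v) (h' : ReachIn A U v w) : ReachIn A U u w :=
  ⟨h.1, h.2.trans h'.2⟩

theorem tail (h : ReachIn A U u v) (hvw : A v w) (hw : w ∈ U) : ReachIn A U u w :=
  ⟨h.1, h.2.tail ⟨hvw, h.mem_right, hw⟩⟩

theorem mono (h : ReachIn A U u v) (hA : ∀ a b, a ∈ U → b ∈ U → A a b → A' a b)
    (hU : U ⊆ U') : ReachIn A' U' u v :=
  ⟨hU h.1, Relation.ReflTransGen.mono (fun _ _ ⟨hab, ha, hb⟩ => ⟨hA _ _ ha hb hab, hU ha, hU hb⟩)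
    _ _ h.2⟩

theorem mono_set (h : ReachIn A U u v) (hU : U ⊆ U') : ReachIn A U' u v :=
  h.mono (fun _ _ _ _ => id) hU

theorem reverse (h : ReachIn A U u v) : ReachIn (flip A) U v u :=
  ⟨h.mem_right, Relation.ReflTransGen.mono (fun _ _ ⟨hab, ha, hb⟩ => ⟨hab, hb, ha⟩) _ _
    (Relation.ReflTransGen.swap _ _ h.2)⟩

theorem eq_of_forall_not_adj (hA : ∀ a b, ¬ A a b) (h : ReachIn A U u v) : u = v := by
  cases h.2 with
  | refl => rfl
  | tail _ hbc => exact absurd hbc.1 (hA _ _)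

theorem avoids_or_exists_enter (h : ReachIn A U u v) (Y : Set V) (hu : u ∉ Y) :
    ReachIn A (U \ Y) u v ∨ ∃ c d, ReachIn A (U \ Y) u c ∧ A c d ∧ d ∈ U ∧ d ∈ Y := by
  obtain ⟨huU, h⟩ := h
  induction h with
  | refl => exact .inl (refl ⟨huU, hu⟩)
  | @tail b c _ hbc ih =>
    rcases ih with hb | hb
    · by_cases hc : c ∈ Y
      · exact .inr ⟨b, c, hb, hbc.1, hbc.2.2, hc⟩
      · exact .inl (hb.tail hbc.1 ⟨hbc.2.2, hc⟩)
    · exact .inr hb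

end ReachIn

theorem reachIn_flip_iff {V : Type*} {A : V → V → Prop} {U : Set V} {u v : V} :
    ReachIn (flip A) U v u ↔ ReachIn A U u v :=
  ⟨ReachIn.reverse, ReachIn.reverse⟩

theorem reachIn_of_isChain {V : Type*} {A : V → V → Prop} {U : Set V} {l : List V} {u v : V}
    (hl : l.IsChain A) (hu : l.head? = some u) (hv : l.getLast? = some v)
    (hU : ∀ w ∈ l, w ∈ U) : ReachIn A U u v := by
  have hne : l ≠ [] := by rintro rfl; simp at hu
  rw [List.head?_eq_some_head hne, Option.some_inj] at hu
  rw [List.getLast?_eq_some_getLast hne, Option.some_inj] at hv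
  subst hu hv
  exact ⟨hU _ (List.head_mem hne), List.relationReflTransGen_of_exists_isChain l
    (hl.imp_of_mem_imp fun a b ha hb hab => ⟨hab, hU a ha, hU b hb⟩) hne⟩

theorem StrongOn.reachIn {V : Type*} {A : V → V → Prop} {C : Set V} {u v : V}
    (h : StrongOn A C) (hu : u ∈ C) (hv : v ∈ C) : ReachIn A C u v := by
  obtain ⟨l, ⟨hl, hlC⟩, hlu, hlv⟩ := h u hu v hv
  exact reachIn_of_isChain hl.2.2 hlu hlv hlC

namespace DipathFromTo

variable {V : Type*} {A A' : V → V → Prop} {l p q : List V} {U : Set V} {u v w z : V}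

theorem singleton (u : V) : DipathFromTo A [u] u u :=
  ⟨⟨List.cons_ne_nil _ _, List.nodup_singleton _, List.isChain_singleton _⟩, rfl, rfl⟩

theorem head_mem (h : DipathFromTo A l u v) : u ∈ l :=
  List.mem_of_mem_head? h.2.1

theorem getLast_mem (h : DipathFromTo A l u v) : v ∈ l :=
  List.mem_of_mem_getLast? h.2.2

theorem head_notMem_tail (h : DipathFromTo A l u v) : u ∉ l.tail := by
  obtain ⟨⟨-, hnd, -⟩, hu, -⟩ := h
  cases l with
  | nil => simp at hu
  | cons a t =>
    simp only [List.head?_cons, Option.some_inj] at hu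
    exact hu ▸ (List.nodup_cons.mp hnd).1

theorem mono (h : DipathFromTo A l u v) (hA : ∀ a b, A a b → A' a b) : DipathFromTo A' l u v :=
  ⟨⟨h.1.1, h.1.2.1, h.1.2.2.imp hA⟩, h.2⟩

theorem reverse (h : DipathFromTo A l u v) : DipathFromTo (flip A) l.reverse v u :=
  ⟨⟨by simpa using h.1.1, List.nodup_reverse.mpr h.1.2.1, List.isChain_reverse.mpr h.1.2.2⟩,
    by simpa using h.2.2, by simpa using h.2.1⟩

theorem append (hp : DipathFromTo A p u w) (hq : DipathFromTo A q w v)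
    (hpq : ∀ z ∈ p, z ∈ q → z = w) : DipathFromTo A (p ++ q.tail) u v := by
  obtain ⟨⟨hp0, hpnd, hpc⟩, hpu, hpw⟩ := hp
  obtain ⟨⟨-, hqnd, hqc⟩, hqw, hqv⟩ := hq
  obtain ⟨q, rfl⟩ : ∃ q', q = w :: q' := by
    cases q with
    | nil => simp at hqw
    | cons a t => simp only [List.head?_cons, Option.some_inj] at hqw; exact ⟨t, by rw [hqw]⟩
  rw [List.nodup_cons] at hqnd
  replace hqc := List.isChain_cons.mp hqc
  refine ⟨⟨by simp [hp0], List.nodup_append.mpr ⟨hpnd, hqnd.2, ?_⟩,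
    List.isChain_append.mpr ⟨hpc, hqc.2, ?_⟩⟩, by simp [List.head?_append, hpu], ?_⟩
  · rintro a ha b hb rfl
    exact hqnd.1 (hpq a ha (List.mem_cons_of_mem _ hb) ▸ hb)
  · simpa [hpw] using hqc.1
  · rw [List.getLast?_cons, Option.some_inj] at hqv
    cases h : q.getLast? <;> simp_all [List.getLast?_append]

/-- Up to `z`, the path can only visit its end `v` as `z` itself. -/
theorem reachIn_to_mem (h : DipathFromTo A l u v) (hz : z ∈ l) (hU : ∀ w ∈ l, w ≠ v → w ∈ U)
    (hzU : z ∈ U) : ReachIn A U u z := by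
  obtain ⟨s, t, rfl⟩ := List.append_of_mem hz
  obtain ⟨⟨-, hnd, hc⟩, hu, hv⟩ := h
  have hvt : v ∈ z :: t := List.mem_of_mem_getLast? (by rwa [← List.getLast?_append_cons s])
  have hsplit : s ++ z :: t = (s ++ [z]) ++ t := by simp
  refine reachIn_of_isChain (l := s ++ [z]) (hsplit ▸ hc).left_of_append ?_ (by simp) ?_
  · cases s <;> simpa using hu
  · intro w hw
    rcases List.mem_append.mp hw with hws | hwz
    · refine hU w (List.mem_append_left _ hws) ?_
      rintro rfl
      exact List.disjoint_of_nodup_append hnd hws hvt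
    · rwa [List.mem_singleton.mp hwz]

theorem reachIn_from_mem (h : DipathFromTo A l u v) (hz : z ∈ l) (hU : ∀ w ∈ l, w ≠ u → w ∈ U)
    (hzU : z ∈ U) : ReachIn A U z v :=
  reachIn_flip_iff.mp <| h.reverse.reachIn_to_mem (List.mem_reverse.mpr hz)
    (fun w hw => hU w (List.mem_reverse.mp hw)) hzU

end DipathFromTo

namespace Separates

variable {V : Type*} {A A' : V → V → Prop} {S T Y Z Z' : Finset V}

theorem inter_subset [DecidableEq V] (h : Separates A S T Z) : S ∩ T ⊆ Z := by
  intro v hv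
  by_contra hvZ
  exact h v (Finset.mem_inter.mp hv).1 v (Finset.mem_inter.mp hv).2 (.refl hvZ)

theorem flip_iff : Separates (flip A) T S Z ↔ Separates A S T Z :=
  ⟨fun h s hs t ht hst => h t ht s hs hst.reverse,
    fun h t ht s hs hts => h s hs t ht (reachIn_flip_iff.mp hts)⟩

theorem mono (h : Separates A' S T Z) (hZ : Z ⊆ Z')
    (hA : ∀ a b, A a b → a ∉ Z' → b ∉ Z' → A' a b) : Separates A S T Z' :=
  fun s hs t ht hst => h s hs t ht <|
    hst.mono (fun a b ha hb hab => hA a b hab ha hb) (Set.compl_subset_compl.mpr hZ)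

/-- Cut a path from `S` to `T` avoiding `Z` at its first vertex in `Y`. -/
theorem of_separates_left (hY : Separates A S T Y) (hA : ∀ a b, A a b → a ∉ Y → A' a b)
    (hZ : Separates A' S Y Z) : Separates A S T Z := by
  intro s hs t ht hst
  by_cases hsY : s ∈ Y
  · exact hZ s hs s hsY (.refl hst.1)
  rcases hst.avoids_or_exists_enter (↑Y) hsY with h | ⟨c, d, hsc, hcd, hdZ, hdY⟩
  · exact hY s hs t ht (h.mono_set fun a ha => ha.2)
  · exact hZ s hs d hdY ((hsc.mono (fun a b ha _ hab => hA a b hab ha.2) Set.sdiff_subset).tail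
      (hA c d hcd hsc.mem_right.2) hdZ)

theorem of_separates_right (hY : Separates A S T Y) (hA : ∀ a b, A a b → b ∉ Y → A' a b)
    (hZ : Separates A' Y T Z) : Separates A S T Z := by
  rw [← flip_iff] at hY hZ ⊢
  exact hY.of_separates_left (fun a b hab hb => hA b a hab hb) hZ

end Separates

namespace IsLinkage

variable {V : Type*} {A A' : V → V → Prop} {S R R' T : Finset V} {P P₁ P₂ : V → List V}
  {τ τ₁ τ₂ : V → V} {a b x y z : V}

theorem refl (h : S ⊆ T) : IsLinkage A S T (fun a => [a]) id :=
  ⟨fun a ha => ⟨h ha, .singleton a⟩, fun _ _ _ _ hne _ hv₁ hv₂ =>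
    hne ((List.mem_singleton.mp hv₁).symm.trans (List.mem_singleton.mp hv₂))⟩

theorem mono (h : IsLinkage A S T P τ) (hA : ∀ a b, A a b → A' a b) : IsLinkage A' S T P τ :=
  ⟨fun a ha => ⟨(h.1 a ha).1, (h.1 a ha).2.mono hA⟩, h.2⟩

theorem injOn (h : IsLinkage A S T P τ) : Set.InjOn τ S := by
  intro a₁ ha₁ a₂ ha₂ heq
  by_contra hne
  exact h.2 a₁ ha₁ a₂ ha₂ hne _ (h.1 a₁ ha₁).2.getLast_mem (heq ▸ (h.1 a₂ ha₂).2.getLast_mem)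

theorem eq_of_mem_source (h : IsLinkage A S T P τ) (hb : b ∈ S) (hz : z ∈ P b) (hzS : z ∈ S) :
    z = b := by
  by_contra hne
  exact h.2 z hzS b hb hne z (h.1 z hzS).2.head_mem hz

/-- Every vertex of `T` ends one of the paths. -/
theorem eq_of_mem_target (h : IsLinkage A S T P τ) (hcard : T.card ≤ S.card) (ha : a ∈ S)
    (hz : z ∈ P a) (hzT : z ∈ T) : z = τ a := by
  obtain ⟨a', ha', rfl⟩ := Finset.surj_on_of_inj_on_of_card_le (fun a _ => τ a)
    (fun a ha => (h.1 a ha).1) (fun _ _ ha₁ ha₂ heq => h.injOn ha₁ ha₂ heq) hcard z hzT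
  by_contra hne
  exact h.2 a' ha' a ha (fun h' => hne (h' ▸ rfl)) _ (h.1 a' ha').2.getLast_mem hz

theorem snoc [DecidableEq V] (h : IsLinkage A S R P τ) (hxy : A x y) (hy : ∀ a ∈ S, y ∉ P a)
    (hR : ∀ r ∈ R, r ≠ x → r ∈ R') (hyR' : y ∈ R') :
    IsLinkage A S R' (fun a => if τ a = x then P a ++ [y] else P a)
      (fun a => if τ a = x then y else τ a) := by
  refine ⟨fun a ha => ?_, fun a₁ ha₁ a₂ ha₂ hne v hv₁ hv₂ => ?_⟩
  · obtain ⟨hτa, hPa⟩ := h.1 a ha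
    by_cases hax : τ a = x
    · beta_reduce
      rw [if_pos hax, if_pos hax]
      rw [hax] at hPa
      refine ⟨hyR', hPa.append (q := [x, y]) ?_ ?_⟩
      · have hxy' : x ≠ y := fun hxy' => hy a ha (hxy' ▸ hPa.getLast_mem)
        exact ⟨⟨by simp, by simpa using hxy', List.isChain_pair.mpr hxy⟩, rfl, rfl⟩
      · intro z hz hz'
        rcases List.mem_pair.mp hz' with rfl | rfl
        · rfl
        · exact absurd hz (hy a ha)
    · simpa only [if_neg hax] using ⟨hR _ hτa hax, hPa⟩
  · have hτ : ∀ a ∈ S, τ a = x → x ∈ P a := fun a ha hax => hax ▸ (h.1 a ha).2.getLast_mem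
    have hPy : ∀ a ∈ S, v ∈ (if τ a = x then P a ++ [y] else P a) →
        v ∈ P a ∨ (v = y ∧ τ a = x) := by
      intro a ha hv
      split_ifs at hv with hax
      · simpa [hax] using hv
      · exact .inl hv
    rcases hPy a₁ ha₁ hv₁ with h₁ | ⟨rfl, hx₁⟩ <;> rcases hPy a₂ ha₂ hv₂ with h₂ | ⟨hvy, hx₂⟩
    · exact h.2 a₁ ha₁ a₂ ha₂ hne v h₁ h₂
    · exact hy a₁ ha₁ (hvy ▸ h₁)
    · exact hy a₂ ha₂ h₂
    · exact h.2 a₁ ha₁ a₂ ha₂ hne x (hτ a₁ ha₁ hx₁) (hτ a₂ ha₂ hx₂)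

theorem trans (h₁ : IsLinkage A S R P₁ τ₁) (h₂ : IsLinkage A R T P₂ τ₂)
    (hmeet : ∀ a ∈ S, ∀ b ∈ R, ∀ z ∈ P₁ a, z ∈ P₂ b → z = b ∧ τ₁ a = b) :
    IsLinkage A S T (fun a => P₁ a ++ (P₂ (τ₁ a)).tail) (fun a => τ₂ (τ₁ a)) := by
  refine ⟨fun a ha => ?_, fun a₁ ha₁ a₂ ha₂ hne v hv₁ hv₂ => ?_⟩
  · obtain ⟨hb, hP₁⟩ := h₁.1 a ha
    obtain ⟨hc, hP₂⟩ := h₂.1 _ hb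
    exact ⟨hc, hP₁.append hP₂ fun z hz hz' => (hmeet a ha _ hb z hz hz').1⟩
  · have hb₁ := (h₁.1 a₁ ha₁).1
    have hb₂ := (h₁.1 a₂ ha₂).1
    rcases List.mem_append.mp hv₁ with h₁' | h₁' <;> rcases List.mem_append.mp hv₂ with h₂' | h₂'
    · exact h₁.2 a₁ ha₁ a₂ ha₂ hne v h₁' h₂'
    · obtain ⟨rfl, -⟩ := hmeet a₁ ha₁ _ hb₂ v h₁' (List.mem_of_mem_tail h₂')
      exact (h₂.1 _ hb₂).2.head_notMem_tail h₂'
    · obtain ⟨rfl, -⟩ := hmeet a₂ ha₂ _ hb₁ v h₂' (List.mem_of_mem_tail h₁')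
      exact (h₂.1 _ hb₁).2.head_notMem_tail h₁'
    · exact h₂.2 _ hb₁ _ hb₂ (fun heq => hne (h₁.injOn ha₁ ha₂ heq)) v
        (List.mem_of_mem_tail h₁') (List.mem_of_mem_tail h₂')

end IsLinkage

section Menger

variable {V : Type*} {A : V → V → Prop} {S S₀ T Y Y' Z₀ : Finset V} {P₁ P₂ : V → List V}
  {τ₁ τ₂ : V → V} {a b x y z : V}

theorem ncard_deleteEdge_lt [Finite V] (hxy : A x y) :
    {e : V × V | deleteEdge A x y e.1 e.2}.ncard < {e : V × V | A e.1 e.2}.ncard :=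
  Set.ncard_lt_ncard ⟨fun _ he => he.1, fun h =>
    (h (show (x, y) ∈ {e : V × V | A e.1 e.2} from hxy)).2 ⟨rfl, rfl⟩⟩

/-- Otherwise the first path up to `z` followed by the second from `z` on would be a walk from `S`
to `T` avoiding `Z₀`. -/
theorem IsLinkage.mem_separator_of_mem_of_mem (hZ₀ : Separates A S T Z₀) (hS₀ : S₀ ⊆ S)
    (hY : Z₀ ⊆ Y) (hY' : Z₀ ⊆ Y') (hcard : Y.card ≤ S₀.card) (h₁ : IsLinkage A S₀ Y P₁ τ₁)
    (h₂ : IsLinkage A Y' T P₂ τ₂) (ha : a ∈ S₀) (hb : b ∈ Y') (hz₁ : z ∈ P₁ a)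
    (hz₂ : z ∈ P₂ b) : z ∈ Z₀ ∧ z = τ₁ a ∧ z = b := by
  have hzZ₀ : z ∈ Z₀ := by
    by_contra hz
    refine hZ₀ a (hS₀ ha) (τ₂ b) (h₂.1 b hb).1 (ReachIn.trans (v := z) ?_ ?_)
    · exact (h₁.1 a ha).2.reachIn_to_mem hz₁
        (fun w hw hne hwZ => hne (h₁.eq_of_mem_target hcard ha hw (hY hwZ))) hz
    · exact (h₂.1 b hb).2.reachIn_from_mem hz₂
        (fun w hw hne hwZ => hne (h₂.eq_of_mem_source hb hw (hY' hwZ))) hz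
  exact ⟨hzZ₀, h₁.eq_of_mem_target hcard ha hz₁ (hY hzZ₀), h₂.eq_of_mem_source hb hz₂ (hY' hzZ₀)⟩

/-- The two linkages are glued through `Z₀` and the edge `x → y`. -/
theorem exists_linkage_of_deleteEdge [DecidableEq V] (hxy : A x y)
    (hZ₀ : Separates (deleteEdge A x y) S T Z₀) (hx : x ∉ Z₀) (hy : y ∉ Z₀) (hS₀ : S₀ ⊆ S)
    (hcard : (insert x Z₀).card ≤ S₀.card)
    (h₁ : IsLinkage (deleteEdge A x y) S₀ (insert x Z₀) P₁ τ₁)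
    (h₂ : IsLinkage (deleteEdge A x y) (insert y Z₀) T P₂ τ₂) :
    ∃ P τ, IsLinkage A S₀ T P τ := by
  have key {a b z} (ha : a ∈ S₀) (hb : b ∈ insert y Z₀) (hz₁ : z ∈ P₁ a) (hz₂ : z ∈ P₂ b) :=
    h₁.mem_separator_of_mem_of_mem hZ₀ hS₀ (Finset.subset_insert x Z₀)
      (Finset.subset_insert y Z₀) hcard h₂ ha hb hz₁ hz₂
  have hA : ∀ a b, deleteEdge A x y a b → A a b := fun _ _ h => h.1
  have hyY' : y ∈ insert y Z₀ := Finset.mem_insert_self y Z₀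
  have hyP₁ : ∀ a ∈ S₀, y ∉ P₁ a := fun a ha hya =>
    hy (key ha hyY' hya (h₂.1 y hyY').2.head_mem).1
  have h₁' := (h₁.mono hA).snoc hxy hyP₁ (fun r hr hrx =>
    Finset.mem_insert_of_mem ((Finset.mem_insert.mp hr).resolve_left hrx)) hyY'
  refine ⟨_, _, h₁'.trans (h₂.mono hA) fun a ha b hb z hz hzb => ?_⟩
  beta_reduce at hz ⊢
  by_cases hax : τ₁ a = x
  · rw [if_pos hax] at hz ⊢
    rcases List.mem_append.mp hz with hz | hz
    · obtain ⟨hzZ₀, rfl, -⟩ := key ha hb hz hzb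
      exact absurd (hax ▸ hzZ₀) hx
    · rw [List.mem_singleton.mp hz] at hzb ⊢
      exact ⟨h₂.eq_of_mem_source hb hzb hyY', h₂.eq_of_mem_source hb hzb hyY'⟩
  · rw [if_neg hax] at hz ⊢
    obtain ⟨-, rfl, rfl⟩ := key ha hb hz hzb
    exact ⟨rfl, rfl⟩

theorem menger [Finite V] (A : V → V → Prop) (S T : Finset V) (k : ℕ)
    (h : ∀ Z : Finset V, Separates A S T Z → k ≤ Z.card) :
    ∃ S₀ ⊆ S, S₀.card = k ∧ ∃ P τ, IsLinkage A S₀ T P τ := by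
  classical
  by_cases hE : ∃ x y, A x y
  · obtain ⟨x, y, hxy⟩ := hE
    by_cases hZ : ∀ Z, Separates (deleteEdge A x y) S T Z → k ≤ Z.card
    · obtain ⟨S₀, hS₀, hk, P, τ, hP⟩ := menger (deleteEdge A x y) S T k hZ
      exact ⟨S₀, hS₀, hk, P, τ, hP.mono fun _ _ h => h.1⟩
    push Not at hZ
    obtain ⟨Z₀, hZ₀, hZ₀k⟩ := hZ
    have hxA : ∀ a b, A a b → a ∉ insert x Z₀ → deleteEdge A x y a b :=
      fun a b hab ha => ⟨hab, fun h => ha (h.1 ▸ Finset.mem_insert_self x Z₀)⟩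
    have hyA : ∀ a b, A a b → b ∉ insert y Z₀ → deleteEdge A x y a b :=
      fun a b hab hb => ⟨hab, fun h => hb (h.2 ▸ Finset.mem_insert_self y Z₀)⟩
    have hY : Separates A S T (insert x Z₀) :=
      hZ₀.mono (Finset.subset_insert x Z₀) fun a b hab ha _ => hxA a b hab ha
    have hY' : Separates A S T (insert y Z₀) :=
      hZ₀.mono (Finset.subset_insert y Z₀) fun a b hab _ hb => hyA a b hab hb
    have hYk : (insert x Z₀).card = k :=
      le_antisymm ((Finset.card_insert_le x Z₀).trans hZ₀k) (h _ hY)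
    have hY'k : (insert y Z₀).card = k :=
      le_antisymm ((Finset.card_insert_le y Z₀).trans hZ₀k) (h _ hY')
    have hx : x ∉ Z₀ := fun hx => by rw [Finset.insert_eq_of_mem hx] at hYk; omega
    have hy : y ∉ Z₀ := fun hy => by rw [Finset.insert_eq_of_mem hy] at hY'k; omega
    obtain ⟨S₀, hS₀, hS₀k, P₁, τ₁, h₁⟩ := menger (deleteEdge A x y) S (insert x Z₀) k
      fun Z hZ => h Z (hY.of_separates_left hxA hZ)
    obtain ⟨R, hR, hRk, P₂, τ₂, h₂⟩ := menger (deleteEdge A x y) (insert y Z₀) T k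
      fun Z hZ => h Z (hY'.of_separates_right hyA hZ)
    obtain rfl : R = insert y Z₀ := Finset.eq_of_subset_of_card_le hR (by omega)
    exact ⟨S₀, hS₀, hS₀k, exists_linkage_of_deleteEdge hxy hZ₀ hx hy hS₀ (by omega) h₁ h₂⟩
  · push Not at hE
    have hsep : Separates A S T (S ∩ T) := fun s hs t ht hst => by
      obtain rfl := hst.eq_of_forall_not_adj hE
      exact hst.1 (Finset.mem_inter.mpr ⟨hs, ht⟩)
    obtain ⟨S₀, hS₀, hk⟩ := Finset.exists_subset_card_eq (h _ hsep)
    exact ⟨S₀, hS₀.trans Finset.inter_subset_left, hk, _, _,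
      IsLinkage.refl (hS₀.trans Finset.inter_subset_right)⟩
termination_by {e : V × V | A e.1 e.2}.ncard
decreasing_by all_goals exact ncard_deleteEdge_lt hxy

end Menger

namespace IsHavenOn

variable {V : Type*} {A : V → V → Prop} {w : ℕ} {B : Finset V → Set V} {X M W Z Z' U : Finset V}
  {c v : V}

theorem isStrongComponent (hB : IsHavenOn A Set.univ w B) (hZ : Z.card < w) :
    IsStrongComponent A (Set.univ \ ↑Z) (B Z) :=
  (hB Z (Set.subset_univ _) hZ).1

theorem antitone (hB : IsHavenOn A Set.univ w B) (hZ : Z.card < w) (hZ' : Z' ⊆ Z) :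
    B Z ⊆ B Z' :=
  (hB Z (Set.subset_univ _) hZ).2 Z' hZ'

theorem notMem (hB : IsHavenOn A Set.univ w B) (hZ : Z.card < w) (hv : v ∈ B Z) : v ∉ Z :=
  ((hB.isStrongComponent hZ).1 hv).2

/-- Otherwise `B (Z ∪ B Z)` would be a nonempty subset of `B Z` disjoint from `B Z`. -/
theorem le_card_add_ncard [Finite V] (hB : IsHavenOn A Set.univ w B) :
    w ≤ Z.card + (B Z).ncard := by
  classical
  by_contra hlt
  set F := (Set.toFinite (B Z)).toFinset
  have hZF : (Z ∪ F).card < w :=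
    (Finset.card_union_le Z F).trans_lt (by rw [← Set.ncard_eq_toFinset_card]; omega)
  obtain ⟨v, hv⟩ := (hB.isStrongComponent hZF).2.1
  exact hB.notMem hZF hv (Finset.mem_union_right _
    ((Set.Finite.mem_toFinset _).mpr (hB.antitone hZF Finset.subset_union_left hv)))

theorem le_card [Fintype V] (hB : IsHavenOn A Set.univ w B) : w ≤ Fintype.card V := by
  simpa using (hB.le_card_add_ncard (Z := ∅)).trans (Nat.add_le_add_left (Set.ncard_le_card _) _)

theorem eq_of_subset_compl (hB : IsHavenOn A Set.univ w B) (hMW : M ⊆ W) (hW : W.card < w)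
    (hBM : B M ⊆ (↑W)ᶜ) : B M = B W :=
  (hB.isStrongComponent hW).2.2.2 (B M) (hB.antitone hW hMW) (fun _ hv => ⟨trivial, hBM hv⟩)
    (hB.isStrongComponent ((Finset.card_le_card hMW).trans_lt hW)).2.2.1

/-- The witness is `M` padded with `|X| - |M|` vertices of `B M`. -/
theorem exists_card_eq_ncard_lt [Finite V] (hB : IsHavenOn A Set.univ w B) (hX : X.card < w)
    (hMX : M.card < X.card) (hBMX : B M ⊆ B X) :
    ∃ X' : Finset V, X'.card = X.card ∧ (B X').ncard < (B X).ncard := by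
  classical
  have hM : M.card < w := hMX.trans hX
  have hsize := hB.le_card_add_ncard (Z := M)
  obtain ⟨F, hF, hFcard⟩ := Finset.exists_subset_card_eq (s := (Set.toFinite (B M)).toFinset)
    (n := X.card - M.card) (by rw [← Set.ncard_eq_toFinset_card]; omega)
  have hFB : ∀ v ∈ F, v ∈ B M := fun v hv => (Set.Finite.mem_toFinset _).mp (hF hv)
  have hcard : (M ∪ F).card = X.card := by
    rw [Finset.card_union_of_disjoint (Finset.disjoint_left.mpr fun v hvM hvF =>
      hB.notMem hM (hFB v hvF) hvM)]
    omega
  have hX' : (M ∪ F).card < w := hcard ▸ hX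
  obtain ⟨v, hv⟩ : F.Nonempty := Finset.card_pos.mp (by omega)
  refine ⟨M ∪ F, hcard, ?_⟩
  calc (B (M ∪ F)).ncard ≤ (B X \ {v}).ncard :=
        Set.ncard_le_ncard fun u hu => ⟨hBMX (hB.antitone hX' Finset.subset_union_left hu),
          fun huv => hB.notMem hX' hu (Set.mem_singleton_iff.mp huv ▸ Finset.mem_union_right _ hv)⟩
    _ < (B X).ncard := Set.ncard_sdiff_singleton_lt_of_mem (hBMX (hFB v hv))

/-- `B (X \ U ∪ Z)` cannot meet `U`, so it is `B (X ∪ Z) ⊆ B X`. -/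
theorem exists_ncard_lt_of_not_reachIn [Finite V] [DecidableEq V]
    (hB : IsHavenOn A Set.univ w B) (hUX : U ⊆ X) (hX : X.card < w) (hW : (X ∪ Z).card < w)
    (hZU : Z.card < U.card) (hc : c ∈ B (X ∪ Z))
    (hU : ∀ u ∈ U, ReachIn A (↑Z)ᶜ c u → ¬ ReachIn A (↑Z)ᶜ u c) :
    ∃ X' : Finset V, X'.card = X.card ∧ (B X').ncard < (B X).ncard := by
  have hMW : X \ U ∪ Z ⊆ X ∪ Z := Finset.union_subset_union Finset.sdiff_subset subset_rfl
  have hM : (X \ U ∪ Z).card < w := (Finset.card_le_card hMW).trans_lt hW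
  have hMX : (X \ U ∪ Z).card < X.card := by
    have := Finset.card_le_card hUX
    calc (X \ U ∪ Z).card ≤ (X \ U).card + Z.card := Finset.card_union_le _ _
      _ < X.card := by rw [Finset.card_sdiff_of_subset hUX]; omega
  have hBM : B (X \ U ∪ Z) = B (X ∪ Z) := by
    refine hB.eq_of_subset_compl hMW hW fun v hv hvW => ?_
    have hvU : v ∈ U := by
      have := hB.notMem hM hv
      simp only [Finset.coe_union, Set.mem_union, Finset.mem_coe, Finset.mem_union,
        Finset.mem_sdiff] at hvW this
      tauto
    have hcM := hB.antitone hW hMW hc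
    have hBZ : B (X \ U ∪ Z) ⊆ (↑Z)ᶜ := fun u hu huZ =>
      hB.notMem hM hu (Finset.mem_union_right _ huZ)
    have hstrong := (hB.isStrongComponent hM).2.2.1
    exact hU v hvU ((hstrong.reachIn hcM hv).mono_set hBZ) ((hstrong.reachIn hv hcM).mono_set hBZ)
  exact hB.exists_card_eq_ncard_lt hX hMX (hBM ▸ hB.antitone hW Finset.subset_union_left)

theorem linked_of_forall_ncard_le [Finite V] {n : ℕ} (hB : IsHavenOn A Set.univ (3 * n) B)
    (hX : X.card = 2 * n) (hmin : ∀ X' : Finset V, X'.card = 2 * n → (B X).ncard ≤ (B X').ncard) :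
    Linked A X := by
  classical
  intro S T hS hT hST
  by_contra hlink
  obtain ⟨Z, hZ, hZS⟩ : ∃ Z, Separates A S T Z ∧ Z.card < S.card := by
    by_contra hsep
    push Not at hsep
    obtain ⟨S₀, hS₀, hS₀card, P, τ, hP⟩ := menger A S T S.card hsep
    obtain rfl := Finset.eq_of_subset_of_card_le hS₀ hS₀card.ge
    exact hlink ⟨P, τ, hP⟩
  have hW : (X ∪ Z).card < 3 * n := by
    -- `|Z \ X| ≤ |Z| - |S ∩ T| < |S \ T| ≤ min |S| (2n - |T|) ≤ n`
    have h₁ := Finset.card_union_add_card_inter X Z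
    have h₂ := Finset.card_union_add_card_inter S T
    have h₃ := Finset.card_le_card (Finset.union_subset hS hT)
    have h₄ := Finset.card_le_card (Finset.subset_inter (Finset.inter_subset_left.trans hS)
      hZ.inter_subset)
    omega
  obtain ⟨c, hc⟩ := (hB.isStrongComponent hW).2.1
  have hswap : ¬ ∃ X' : Finset V, X'.card = X.card ∧ (B X').ncard < (B X).ncard :=
    fun ⟨X', hX', hlt⟩ => (hmin X' (hX'.trans hX)).not_gt hlt
  by_cases hSc : ∃ s ∈ S, ReachIn A (↑Z)ᶜ s c
  · obtain ⟨s, hs, hsc⟩ := hSc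
    exact hswap (hB.exists_ncard_lt_of_not_reachIn hT (by omega) hW (hST ▸ hZS) hc
      fun t ht hct _ => hZ s hs t ht (hsc.trans hct))
  · push Not at hSc
    exact hswap (hB.exists_ncard_lt_of_not_reachIn hS (by omega) hW hZS hc
      fun s hs _ hsc => hSc s hs hsc)

end IsHavenOn

theorem haven_gives_linked_set_general {V : Type} [Fintype V]
    (n : ℕ) (A : V → V → Prop)
    (hH : HasHaven A (3 * n)) :
    ∃ X : Finset V, X.card = 2 * n ∧ Linked A X := by
  obtain ⟨B, hB⟩ := hH
  have hV : 2 * n ≤ (Finset.univ : Finset V).card := by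
    have := hB.le_card
    rw [Finset.card_univ]
    omega
  obtain ⟨X, hX, hmin⟩ := Finset.exists_min_image (Finset.univ.powersetCard (2 * n))
    (fun X => (B X).ncard) (Finset.powersetCard_nonempty.mpr hV)
  rw [Finset.mem_powersetCard_univ] at hX
  exact ⟨X, hX, hB.linked_of_forall_ncard_le hX fun X' hX' =>
    hmin X' (Finset.mem_powersetCard_univ.mpr hX')⟩

/-- If a finite digraph has a haven of order `3n` (with `n ≥ 1`),
then it has a linked set of size exactly `2n`. -/
theorem haven_gives_linked_set {V : Type} [Fintype V] [DecidableEq V]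
    (n : ℕ) (hn : 0 < n) (A : V → V → Prop)
    (hH : HasHaven A (3 * n)) :
    ∃ X : Finset V, X.card = 2 * n ∧ Linked A X :=
  haven_gives_linked_set_general n A hH
end

section
/- Let D be a finite digraph which has a faithful representation (D, 𝒱, ℰ, ν, ε) of some graph G, and suppose that G has a haven of order h + 1, where h is a positive even integer. Then D has a haven of order h/2 + 1. -/
/-- A representation of the graph `G` in the digraph on `V` with adjacency `A`:
collections of pairwise vertex-disjoint strongly connected subdigraphs indexed by the
vertices of `G`, and of pairwise vertex-disjoint `2`-eulerianizable subdigraphs indexed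
by the edges of `G`, such that the subdigraph of each edge shares a vertex with the
subdigraph of each of its two ends. -/
structure DigraphRep (V : Type*) [Fintype V] (A : V → V → Prop)
    {W : Type*} (G : SimpleGraph W) where
  vS : W → Set V
  vA : W → V → V → Prop
  eS : Sym2 W → Set V
  eA : Sym2 W → V → V → Prop
  vSub : ∀ w, IsSubdigraph A (vS w) (vA w)
  vNonempty : ∀ w, (vS w).Nonempty
  vStrong : ∀ w, StrongOn (vA w) (vS w)
  vDisj : ∀ w w', w ≠ w' → Disjoint (vS w) (vS w')
  eSub : ∀ e ∈ G.edgeSet, IsSubdigraph A (eS e) (eA e)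
  eNonempty : ∀ e ∈ G.edgeSet, (eS e).Nonempty
  eEul : ∀ e ∈ G.edgeSet, Eulerianizable (eA e) (eS e) 2
  eDisj : ∀ e ∈ G.edgeSet, ∀ e' ∈ G.edgeSet, e ≠ e' → Disjoint (eS e) (eS e')
  meets : ∀ e ∈ G.edgeSet, ∀ w ∈ e, (eS e ∩ vS w).Nonempty

/-- The representation is faithful: the subdigraph of each edge is vertex-disjoint from
the subdigraph of every vertex of `G` that is not an end of that edge. -/
def DigraphRep.Faithful {V W : Type*} [Fintype V] {A : V → V → Prop}
    {G : SimpleGraph W} (R : DigraphRep V A G) : Prop :=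
  ∀ e ∈ G.edgeSet, ∀ w, w ∉ e → Disjoint (R.eS e) (R.vS w)

/-- The graph `G` is connected on the vertex set `S`: any two vertices of `S` are joined
by a walk all of whose vertices lie in `S`. -/
def UConnOn {W : Type*} (G : SimpleGraph W) (S : Set W) : Prop :=
  ∀ u ∈ S, ∀ v ∈ S, ∃ p : G.Walk u v, ∀ x ∈ p.support, x ∈ S

/-- `C` is (the vertex set of) a connected component of the subgraph of `G` induced on `T`. -/
def UIsComponent {W : Type*} (G : SimpleGraph W) (T C : Set W) : Prop :=
  C ⊆ T ∧ C.Nonempty ∧ UConnOn G C ∧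
    ∀ C' : Set W, C ⊆ C' → C' ⊆ T → UConnOn G C' → C' = C

/-- The (undirected) graph `G` has a haven of order `w`. -/
def GHasHaven {W : Type*} (G : SimpleGraph W) (w : ℕ) : Prop :=
  ∃ B : Finset W → Set W, ∀ Z : Finset W, Z.card < w →
    UIsComponent G (↑Z)ᶜ (B Z) ∧ ∀ Z' : Finset W, Z' ⊆ Z → B Z ⊆ B Z'

/-!
For `|Z| ≤ h/2` let `Ẑ` be the set of vertices of `G` whose vertex subdigraph, or the subdigraph
of an incident edge, meets `Z`. By faithfulness every vertex of `D` touches at most two vertices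
of `G`, so `|Ẑ| ≤ h` and the haven of `G` provides a component `β(Ẑ)` of `G - Ẑ`. The union of the
subdigraphs of the vertices and edges of `β(Ẑ)` is strongly connected, avoids `Z`, and shrinks as
`Z` grows, so the strong components of `D - Z` containing these sets form a haven of `D`.
-/

open Relation Finset

section Reachability

variable {V : Type*} {A A' : V → V → Prop} {S T K K' X X' : Set V} {l : List V} {u v w x : V}

def induceAdj (A : V → V → Prop) (S : Set V) (a b : V) : Prop :=
  A a b ∧ a ∈ S ∧ b ∈ S

lemma induceAdj_mono (hA : ∀ a b, A' a b → A a b) (hST : S ⊆ T) :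
    induceAdj A' S ≤ induceAdj A T :=
  fun a b h => ⟨hA a b h.1, hST h.2.1, hST h.2.2⟩

lemma Relation.ReflTransGen.mono_induceAdj (hA : ∀ a b, A' a b → A a b) (hST : S ⊆ T)
    (h : ReflTransGen (induceAdj A' S) u v) : ReflTransGen (induceAdj A T) u v :=
  ReflTransGen.mono (induceAdj_mono hA hST) _ _ h

lemma reflTransGen_of_dipathIn (hl : DipathIn A S l) (hu : l.head? = some u)
    (hv : l.getLast? = some v) : ReflTransGen (induceAdj A S) u v := by
  obtain ⟨⟨hne, -, hch⟩, hmem⟩ := hl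
  rw [List.head?_eq_some_head hne, Option.some_inj] at hu
  rw [List.getLast?_eq_some_getLast hne, Option.some_inj] at hv
  subst hu hv
  exact List.relationReflTransGen_of_exists_isChain l
    (hch.imp_of_mem_imp fun a b ha hb hab => ⟨hab, hmem a ha, hmem b hb⟩) hne

/-- If `w` already lies on the path, cut the path at `w` instead of extending it. -/
lemma DipathIn.exists_snoc (hl : DipathIn A S l) (hu : l.head? = some u)
    (hv : l.getLast? = some v) (hvw : A v w) (hw : w ∈ S) :
    ∃ l', DipathIn A S l' ∧ l'.head? = some u ∧ l'.getLast? = some w := by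
  obtain ⟨⟨hne, hnd, hch⟩, hmem⟩ := hl
  by_cases hwl : w ∈ l
  · obtain ⟨s, t, rfl⟩ := List.append_of_mem hwl
    have hpre : s ++ [w] <+: s ++ w :: t := ⟨t, by simp⟩
    refine ⟨s ++ [w], ⟨⟨by simp, hnd.sublist hpre.sublist, hch.prefix hpre⟩,
      fun x hx => hmem x (hpre.subset hx)⟩, ?_, List.getLast?_concat⟩
    rw [← hu]
    cases s <;> simp
  · refine ⟨l ++ [w], ⟨⟨by simp, ?_, ?_⟩, ?_⟩, ?_, List.getLast?_concat⟩
    · exact List.nodup_append.2 ⟨hnd, by simp, by grind⟩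
    · exact List.isChain_append.2 ⟨hch, by simp, by grind⟩
    · grind
    · rw [List.head?_append, hu]; rfl

lemma exists_dipathIn_of_reflTransGen (hu : u ∈ S) (h : ReflTransGen (induceAdj A S) u v) :
    ∃ l, DipathIn A S l ∧ l.head? = some u ∧ l.getLast? = some v := by
  induction h with
  | refl => exact ⟨[u], ⟨⟨by simp, by simp, List.isChain_singleton u⟩, by simpa⟩, rfl, rfl⟩
  | tail _ hbc ih =>
    obtain ⟨l, hl, hlu, hlb⟩ := ih
    exact hl.exists_snoc hlu hlb hbc.1 hbc.2.2

theorem strongOn_iff_reflTransGen :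
    StrongOn A S ↔ ∀ u ∈ S, ∀ v ∈ S, ReflTransGen (induceAdj A S) u v :=
  forall₂_congr fun _ hu => forall₂_congr fun _ _ =>
    ⟨fun ⟨_, hl, hlu, hlv⟩ => reflTransGen_of_dipathIn hl hlu hlv,
      exists_dipathIn_of_reflTransGen hu⟩

lemma StrongOn.reflTransGen_of_subdigraph (hA' : IsSubdigraph A S A') (hS : StrongOn A' S)
    (hST : S ⊆ T) (hu : u ∈ S) (hv : v ∈ S) : ReflTransGen (induceAdj A T) u v :=
  (strongOn_iff_reflTransGen.1 hS u hu v hv).mono_induceAdj (fun a b hab => (hA' a b hab).1) hST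

lemma StrongOn.union (hS : StrongOn A S) (hT : StrongOn A T) (hxS : x ∈ S) (hxT : x ∈ T) :
    StrongOn A (S ∪ T) := by
  have lift {U : Set V} (hU : StrongOn A U) (hUST : U ⊆ S ∪ T) {a b : V} (ha : a ∈ U)
      (hb : b ∈ U) : ReflTransGen (induceAdj A (S ∪ T)) a b :=
    (strongOn_iff_reflTransGen.1 hU a ha b hb).mono_induceAdj (fun _ _ => id) hUST
  refine strongOn_iff_reflTransGen.2 fun a ha b hb => ?_
  have to_x : ReflTransGen (induceAdj A (S ∪ T)) a x := by
    rcases ha with ha | ha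
    exacts [lift hS Set.subset_union_left ha hxS, lift hT Set.subset_union_right ha hxT]
  have from_x : ReflTransGen (induceAdj A (S ∪ T)) x b := by
    rcases hb with hb | hb
    exacts [lift hS Set.subset_union_left hxS hb, lift hT Set.subset_union_right hxT hb]
  exact to_x.trans from_x

def strongComponentOf (A : V → V → Prop) (X K : Set V) : Set V :=
  {v | ∃ S ⊆ X, StrongOn A S ∧ K ⊆ S ∧ v ∈ S}

lemma subset_strongComponentOf (hS : StrongOn A S) (hSX : S ⊆ X) (hKS : K ⊆ S) :
    S ⊆ strongComponentOf A X K :=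
  fun _ hv => ⟨S, hSX, hS, hKS, hv⟩

lemma isStrongComponent_strongComponentOf (hK : K.Nonempty) (hKs : StrongOn A K) (hKX : K ⊆ X) :
    IsStrongComponent A X (strongComponentOf A X K) := by
  obtain ⟨x, hx⟩ := hK
  refine ⟨fun v ⟨S, hSX, _, _, hv⟩ => hSX hv, ⟨x, K, hKX, hKs, le_rfl, hx⟩, ?_, ?_⟩
  · refine strongOn_iff_reflTransGen.2
      fun a ⟨Sa, hSaX, hSa, hKSa, ha⟩ b ⟨Sb, hSbX, hSb, hKSb, hb⟩ => ?_
    have hU := hSa.union hSb (hKSa hx) (hKSb hx)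
    exact (strongOn_iff_reflTransGen.1 hU a (Or.inl ha) b (Or.inr hb)).mono_induceAdj
      (fun _ _ => id) (subset_strongComponentOf hU (Set.union_subset hSaX hSbX)
        (hKSa.trans Set.subset_union_left))
  · intro C hC hCX hCs
    exact (subset_strongComponentOf hCs hCX
      (fun y hy => hC ⟨K, hKX, hKs, le_rfl, hy⟩)).antisymm hC

lemma strongComponentOf_mono (hK : K.Nonempty) (hKK' : K ⊆ K') (hK' : StrongOn A K')
    (hK'X' : K' ⊆ X') (hXX' : X ⊆ X') : strongComponentOf A X K ⊆ strongComponentOf A X' K' := by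
  obtain ⟨x, hx⟩ := hK
  rintro v ⟨S, hSX, hS, hKS, hv⟩
  exact ⟨S ∪ K', Set.union_subset (hSX.trans hXX') hK'X', hS.union hK' (hKS hx) (hKK' hx),
    Set.subset_union_right, Or.inl hv⟩

end Reachability

/-- The haven sends `Z` to the strong component of `D - Z` containing `K Z`. -/
theorem hasHaven_of_strongOn_of_antitone {V : Type*} {A : V → V → Prop} {w : ℕ}
    (K : Finset V → Set V) (hne : ∀ Z : Finset V, #Z < w → (K Z).Nonempty)
    (hstrong : ∀ Z : Finset V, #Z < w → StrongOn A (K Z))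
    (hdisj : ∀ Z : Finset V, #Z < w → Disjoint (K Z) ↑Z)
    (hanti : ∀ Z : Finset V, #Z < w → ∀ Z' ⊆ Z, K Z ⊆ K Z') :
    HasHaven A w := by
  have hsub (Z : Finset V) (hZ : #Z < w) : K Z ⊆ Set.univ \ ↑Z :=
    Set.subset_sdiff.2 ⟨Set.subset_univ _, hdisj Z hZ⟩
  refine ⟨fun Z => strongComponentOf A (Set.univ \ ↑Z) (K Z), fun Z _ hZ =>
    ⟨isStrongComponent_strongComponentOf (hne Z hZ) (hstrong Z hZ) (hsub Z hZ), fun Z' hZ'Z => ?_⟩⟩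
  have hZ' : #Z' < w := (card_le_card hZ'Z).trans_lt hZ
  exact strongComponentOf_mono (hne Z hZ) (hanti Z hZ Z' hZ'Z) (hstrong Z' hZ') (hsub Z' hZ')
    (Set.sdiff_subset_sdiff_right (coe_subset.2 hZ'Z))

namespace DigraphRep

variable {V W : Type*} [Fintype V] {A : V → V → Prop} {G : SimpleGraph W} (R : DigraphRep V A G)

def Touches (z : V) (w : W) : Prop :=
  z ∈ R.vS w ∨ ∃ e ∈ G.edgeSet, z ∈ R.eS e ∧ w ∈ e

/-- The vertices touched are the ends of the unique edge subdigraph containing `z`, or else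
the unique vertex subdigraph containing it. -/
lemma card_touches_le_two [Fintype W] (z : V) [DecidablePred (R.Touches z)]
    (hR : R.Faithful) : #{w | R.Touches z w} ≤ 2 := by
  classical
  by_cases hE : ∃ e ∈ G.edgeSet, z ∈ R.eS e
  · obtain ⟨e, he, hz⟩ := hE
    have hsub : ({w | R.Touches z w} : Finset W) ⊆ e.toFinset := by
      simp only [subset_iff, mem_filter, mem_univ, true_and, Sym2.mem_toFinset]
      rintro w (hw | ⟨e', he', hz', hwe'⟩)
      · by_contra hwe
        exact Set.disjoint_left.1 (hR e he w hwe) hz hw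
      · obtain rfl : e' = e := by
          by_contra hne
          exact Set.disjoint_left.1 (R.eDisj e' he' e he hne) hz' hz
        exact hwe'
    calc _ ≤ #e.toFinset := card_le_card hsub
      _ ≤ 2 := by rw [Sym2.card_toFinset]; split_ifs <;> omega
  · refine (card_le_one.2 ?_).trans one_le_two
    simp only [mem_filter, mem_univ, true_and]
    rintro a (ha | ⟨e, he, hz, -⟩) b (hb | ⟨e, he, hz, -⟩)
    · by_contra hne
      exact Set.disjoint_left.1 (R.vDisj a b hne) ha hb
    all_goals exact absurd ⟨e, he, hz⟩ hE

open scoped Classical in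
noncomputable def touchedBy [Fintype W] (Z : Finset V) : Finset W :=
  {w | ∃ z ∈ Z, R.Touches z w}

lemma card_touchedBy_le [Fintype W] (hR : R.Faithful) (Z : Finset V) :
    #(R.touchedBy Z) ≤ 2 * #Z := by
  classical
  calc #(R.touchedBy Z) ≤ #(Z.biUnion fun z => {w | R.Touches z w}) := by
        refine card_le_card fun w hw => ?_
        simp only [touchedBy, mem_filter, mem_univ, true_and] at hw
        simpa using hw
    _ ≤ ∑ z ∈ Z, #{w | R.Touches z w} := card_biUnion_le
    _ ≤ ∑ _z ∈ Z, 2 := sum_le_sum fun z _ => R.card_touches_le_two z hR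
    _ = 2 * #Z := by rw [sum_const, smul_eq_mul, mul_comm]

lemma touchedBy_mono [Fintype W] {Z Z' : Finset V} (h : Z' ⊆ Z) :
    R.touchedBy Z' ⊆ R.touchedBy Z := by
  intro w
  simp only [touchedBy, mem_filter, mem_univ, true_and]
  exact fun ⟨z, hz, hzw⟩ => ⟨z, h hz, hzw⟩

def core (b : Set W) : Set V :=
  (⋃ w ∈ b, R.vS w) ∪ ⋃ e ∈ {e ∈ G.edgeSet | ∀ w ∈ e, w ∈ b}, R.eS e

variable {R} {b b' : Set W} {w w' : W} {e : Sym2 W} {x y : V}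

lemma core_mono (h : b ⊆ b') : R.core b ⊆ R.core b' :=
  Set.union_subset_union (Set.biUnion_subset_biUnion_left h)
    (Set.biUnion_subset_biUnion_left fun _ he => ⟨he.1, fun w hw => h (he.2 w hw)⟩)

lemma vS_subset_core (hw : w ∈ b) : R.vS w ⊆ R.core b :=
  Set.subset_union_of_subset_left (Set.subset_biUnion_of_mem (u := R.vS) hw) _

lemma eS_subset_core (he : e ∈ G.edgeSet) (hb : ∀ w ∈ e, w ∈ b) : R.eS e ⊆ R.core b :=
  fun _ hx => Or.inr (Set.mem_iUnion₂.2 ⟨e, ⟨he, hb⟩, hx⟩)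

lemma core_nonempty (hb : b.Nonempty) : (R.core b).Nonempty :=
  let ⟨_, hw⟩ := hb
  (R.vNonempty _).mono (vS_subset_core hw)

lemma disjoint_core [Fintype W] {Z : Finset V} (hZ : b ⊆ (↑(R.touchedBy Z))ᶜ) :
    Disjoint (R.core b) ↑Z := by
  refine Set.disjoint_right.2 fun z hz hzb => ?_
  rcases hzb with hzb | hzb
  · obtain ⟨w, hwb, hzw⟩ := Set.mem_iUnion₂.1 hzb
    exact hZ hwb (by simpa [touchedBy] using ⟨z, hz, Or.inl hzw⟩)
  · obtain ⟨e, ⟨he, heb⟩, hze⟩ := Set.mem_iUnion₂.1 hzb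
    have hwe := e.out_fst_mem
    exact hZ (heb _ hwe) (by simpa [touchedBy] using ⟨z, hz, Or.inr ⟨e, he, hze, hwe⟩⟩)

lemma reflTransGen_core_of_mem_vS (hw : w ∈ b) (hx : x ∈ R.vS w) (hy : y ∈ R.vS w) :
    ReflTransGen (induceAdj A (R.core b)) x y :=
  (R.vStrong w).reflTransGen_of_subdigraph (R.vSub w) (vS_subset_core hw) hx hy

lemma reflTransGen_core_of_mem_eS (he : e ∈ G.edgeSet) (hb : ∀ w ∈ e, w ∈ b)
    (hx : x ∈ R.eS e) (hy : y ∈ R.eS e) : ReflTransGen (induceAdj A (R.core b)) x y :=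
  (R.eEul e he).1.reflTransGen_of_subdigraph (R.eSub e he) (eS_subset_core he hb) hx hy

/-- Each edge subdigraph is strongly connected and meets the subdigraphs of both its ends, so
a walk of `G` inside `b` lifts to a directed path in the core. -/
lemma reflTransGen_core_of_walk (p : G.Walk w w') (hp : ∀ v ∈ p.support, v ∈ b)
    (hx : x ∈ R.vS w) (hy : y ∈ R.vS w') : ReflTransGen (induceAdj A (R.core b)) x y := by
  induction p generalizing x with
  | nil => exact reflTransGen_core_of_mem_vS (hp _ (by simp)) hx hy
  | @cons u u₁ _ hadj p ih =>
    have heb : ∀ v ∈ s(u, u₁), v ∈ b := by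
      simpa using ⟨hp u (by simp), hp u₁ (by simp)⟩
    obtain ⟨q, hqe, hqv⟩ := R.meets _ hadj u (Sym2.mem_mk_left u u₁)
    obtain ⟨q₁, hq₁e, hq₁v⟩ := R.meets _ hadj u₁ (Sym2.mem_mk_right u u₁)
    exact (reflTransGen_core_of_mem_vS (heb u (Sym2.mem_mk_left u u₁)) hx hqv).trans <|
      (reflTransGen_core_of_mem_eS hadj heb hqe hq₁e).trans <|
      ih (fun v hv => hp v (by simp [hv])) hq₁v hy

lemma exists_mem_vS_reflTransGen_core (hx : x ∈ R.core b) :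
    ∃ w ∈ b, ∃ q ∈ R.vS w, ReflTransGen (induceAdj A (R.core b)) x q ∧
      ReflTransGen (induceAdj A (R.core b)) q x := by
  rcases hx with hx | hx
  · obtain ⟨w, hw, hxw⟩ := Set.mem_iUnion₂.1 hx
    exact ⟨w, hw, x, hxw, .refl, .refl⟩
  · obtain ⟨e, ⟨he, heb⟩, hxe⟩ := Set.mem_iUnion₂.1 hx
    obtain ⟨q, hqe, hqv⟩ := R.meets e he _ e.out_fst_mem
    exact ⟨_, heb _ e.out_fst_mem, q, hqv, reflTransGen_core_of_mem_eS he heb hxe hqe,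
      reflTransGen_core_of_mem_eS he heb hqe hxe⟩

lemma strongOn_core (hb : UConnOn G b) : StrongOn A (R.core b) := by
  refine strongOn_iff_reflTransGen.2 fun x hx y hy => ?_
  obtain ⟨w, hw, q, hq, hxq, -⟩ := exists_mem_vS_reflTransGen_core hx
  obtain ⟨w', hw', q', hq', -, hq'y⟩ := exists_mem_vS_reflTransGen_core hy
  obtain ⟨p, hp⟩ := hb w hw w' hw'
  exact hxq.trans <| (reflTransGen_core_of_walk p hp hq hq').trans hq'y

end DigraphRep

theorem faithful_representation_haven_general {V W : Type} [Fintype V] [Fintype W]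
    (A : V → V → Prop) (G : SimpleGraph W) (h : ℕ)
    (R : DigraphRep V A G) (hfaith : R.Faithful) (hG : GHasHaven G (h + 1)) :
    HasHaven A (h / 2 + 1) := by
  obtain ⟨β, hβ⟩ := hG
  have hcard (Z : Finset V) (hZ : #Z < h / 2 + 1) : #(R.touchedBy Z) < h + 1 := by
    have := R.card_touchedBy_le hfaith Z
    omega
  refine hasHaven_of_strongOn_of_antitone (fun Z => R.core (β (R.touchedBy Z)))
    (fun Z hZ => R.core_nonempty (hβ _ (hcard Z hZ)).1.2.1)
    (fun Z hZ => R.strongOn_core (hβ _ (hcard Z hZ)).1.2.2.1)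
    (fun Z hZ => R.disjoint_core (hβ _ (hcard Z hZ)).1.1)
    fun Z hZ Z' hZ'Z => R.core_mono ((hβ _ (hcard Z hZ)).2 _ (R.touchedBy_mono hZ'Z))

/-- If a finite digraph has a faithful representation of a graph `G`, and `G`
has a haven of order `h + 1` for a positive even integer `h`, then the digraph has a haven of
order `h / 2 + 1`. -/
theorem faithful_representation_haven {V W : Type} [Fintype V] [Fintype W]
    [DecidableEq V] [DecidableEq W] (A : V → V → Prop) (G : SimpleGraph W)
    (h : ℕ) (hpos : 0 < h) (heven : Even h)
    (R : DigraphRep V A G) (hfaith : R.Faithful) (hG : GHasHaven G (h + 1)) :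
    HasHaven A (h / 2 + 1) :=
  faithful_representation_haven_general A G h R hfaith hG
end

section
/- Let n and b be non-negative integers. There exists a positive integer N = N(n, b) such that the following holds: if each edge of the complete graph K_N is labeled with a subset of the vertex set of size at most b, such that no edge receives a label set containing one of its end-vertices, then there is a set S of n vertices such that no edge with both ends in S has any vertex of S in its label set. -/
/-!
Call a triple `{x, u, v}` bad if `x` labels the edge `uv`. There are at most `b * C(N, 2)` bad
triples, and each lies in a `C(n, 3) / C(N, 3)` fraction of the `n`-sets, so once
`b * C(n, 3) * C(N, 2) < C(N, 3)`, i.e. `3 * b * C(n, 3) < N - 2`, some `n`-set contains no bad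
triple; such a set is the required `S`.
-/

open Finset

theorem Nat.choose_two_mul_lt_choose_three {N c : ℕ} (h : 3 * c + 2 < N) :
    N.choose 2 * c < N.choose 3 := by
  have hpos : 0 < N.choose 2 := Nat.choose_pos (by omega)
  have h3 : N.choose 2 * c * 3 < N.choose 3 * 3 :=
    calc N.choose 2 * c * 3 = N.choose 2 * (3 * c) := by ring
      _ < N.choose 2 * (N - 2) := by gcongr; omega
      _ = N.choose 3 * 3 := (Nat.choose_succ_right_eq N 2).symm
  omega

namespace Finset

variable {α : Type*} [Fintype α] [DecidableEq α]

/-- Union bound: each `A ∈ 𝒜` lies in `C(N - t, k - t)` of the `k`-sets, and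
`C(N, t) * C(N - t, k - t) = C(N, k) * C(k, t)`. -/
theorem exists_card_eq_forall_not_subset {𝒜 : Finset (Finset α)} {t k : ℕ}
    (h𝒜 : ∀ A ∈ 𝒜, #A = t) (hk : k ≤ Fintype.card α)
    (hcard : #𝒜 * k.choose t < (Fintype.card α).choose t) :
    ∃ S : Finset α, #S = k ∧ ∀ A ∈ 𝒜, ¬ A ⊆ S := by
  set N := Fintype.card α
  rcases lt_or_ge k t with hkt | htk
  · obtain ⟨S, -, hS⟩ := exists_subset_card_eq (s := (univ : Finset α)) (by simpa using hk)
    refine ⟨S, hS, fun A hA hAS => ?_⟩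
    have := card_le_card hAS
    rw [h𝒜 A hA] at this
    omega
  set 𝒮 := 𝒜.biUnion fun A => (univ.powersetCard k).filter (A ⊆ ·)
  have h𝒮 : #𝒮 ≤ #𝒜 * (N - t).choose (k - t) := by
    refine card_biUnion_le_card_mul _ _ _ fun A hA => ?_
    rw [card_filter_powersetCard_subset _ _ _ (subset_univ A) (h𝒜 A hA ▸ htk), h𝒜 A hA, card_univ]
  have hlt : #𝒮 < #(univ.powersetCard k : Finset (Finset α)) := by
    rw [card_powersetCard, card_univ]
    refine Nat.lt_of_mul_lt_mul_right (a := N.choose t) ?_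
    calc #𝒮 * N.choose t ≤ #𝒜 * (N.choose t * (N - t).choose (k - t)) := by
            rw [mul_comm _ ((N - t).choose _), ← mul_assoc]; gcongr
      _ = #𝒜 * k.choose t * N.choose k := by rw [← Nat.choose_mul htk]; ring
      _ < N.choose t * N.choose k := by gcongr; exact Nat.choose_pos hk
      _ = N.choose k * N.choose t := mul_comm _ _
  obtain ⟨S, hS, hS𝒮⟩ := exists_mem_notMem_of_card_lt_card hlt
  refine ⟨S, (mem_powersetCard.1 hS).2, fun A hA hAS => hS𝒮 ?_⟩
  exact mem_biUnion.2 ⟨A, hA, mem_filter.2 ⟨hS, hAS⟩⟩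

def labelTriples (L : Sym2 α → Finset α) : Finset (Finset α) :=
  (⊤ : SimpleGraph α).edgeFinset.biUnion fun e => (L e).image fun x => insert x e.toFinset

theorem card_labelTriples_le {L : Sym2 α → Finset α} {b : ℕ}
    (hL : ∀ e : Sym2 α, ¬ e.IsDiag → #(L e) ≤ b) :
    #(labelTriples L) ≤ (Fintype.card α).choose 2 * b := by
  rw [← SimpleGraph.card_edgeFinset_top_eq_card_choose_two]
  refine card_biUnion_le_card_mul _ _ _ fun e he => card_image_le.trans (hL e ?_)
  simpa using he

theorem card_eq_three_of_mem_labelTriples {L : Sym2 α → Finset α}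
    (hL : ∀ e : Sym2 α, ¬ e.IsDiag → ∀ u ∈ e, u ∉ L e) : ∀ A ∈ labelTriples L, #A = 3 := by
  intro A hA
  simp only [labelTriples, mem_biUnion, mem_image] at hA
  obtain ⟨e, he, x, hx, rfl⟩ := hA
  have he : ¬ e.IsDiag := by simpa using he
  rw [card_insert_of_notMem (fun h => hL e he x (Sym2.mem_toFinset.1 h) hx),
    Sym2.card_toFinset_of_not_isDiag e he]

theorem insert_mem_labelTriples {L : Sym2 α → Finset α} {u v x : α} (huv : u ≠ v)
    (hx : x ∈ L s(u, v)) : {x, u, v} ∈ labelTriples L := by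
  simp only [labelTriples, mem_biUnion, mem_image]
  exact ⟨s(u, v), by simpa using huv, x, hx, by rw [Sym2.toFinset_mk_eq]⟩

end Finset

/-- For all `n, b` there is `N ≥ 1` such that: whenever each edge of `K_N`
is labeled with a set of at most `b` vertices not containing either of its ends, there is a
set `S` of `n` vertices such that no edge with both ends in `S` has a label in `S`. -/
theorem labeled_clique_ramsey (n b : ℕ) :
    ∃ N : ℕ, 0 < N ∧
      ∀ L : Sym2 (Fin N) → Finset (Fin N),
        (∀ e : Sym2 (Fin N), ¬ e.IsDiag → (L e).card ≤ b ∧ ∀ u ∈ e, u ∉ L e) →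
        ∃ S : Finset (Fin N), S.card = n ∧
          ∀ u ∈ S, ∀ v ∈ S, u ≠ v → ∀ x ∈ L s(u, v), x ∉ S := by
  set N := 3 * (b * n.choose 3) + n + 3
  refine ⟨N, by omega, fun L hL => ?_⟩
  have hcard : #(labelTriples L) * n.choose 3 < (Fintype.card (Fin N)).choose 3 :=
    calc #(labelTriples L) * n.choose 3 ≤ (Fintype.card (Fin N)).choose 2 * b * n.choose 3 :=
          Nat.mul_le_mul_right _ (card_labelTriples_le fun e he => (hL e he).1)
      _ < (Fintype.card (Fin N)).choose 3 := by
          rw [mul_assoc, Fintype.card_fin]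
          exact Nat.choose_two_mul_lt_choose_three (by omega)
  obtain ⟨S, hS, hfree⟩ := exists_card_eq_forall_not_subset
    (card_eq_three_of_mem_labelTriples fun e he => (hL e he).2)
    (by rw [Fintype.card_fin]; omega) hcard
  refine ⟨S, hS, fun u hu v hv huv x hx hxS => hfree _ (insert_mem_labelTriples huv hx) ?_⟩
  simp [insert_subset_iff, hu, hv, hxS]
end
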